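/- In the category of groupoids, the pullback of a functor that is both an equivalence and an isofibration along any functor is again an equivalence (right properness of the canonical model structure on groupoids at the level of a single pullback square). -/

import Mathlib

/-! Since `p` is fully faithful, a morphism between the first components of two objects of the
strict pullback lifts uniquely to their second components, so the projection is fully faithful.
An essentially surjective isofibration is surjective on objects (lift the isomorphism
`p e ≅ b` to an isomorphism `e ≅ e'` with `p e' = b`), and then so is the projection. -/

open CategoryTheory

/-- A functor of groupoids is an isofibration if every isomorphism out of the image of an
object lifts to an isomorphism out of that object. -/
def IsIsofibration {E B : Type*} [Groupoid E] [Groupoid B] (p : E ⥤ B) : Prop :=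
  ∀ (e : E) (b : B) (φ : p.obj e ≅ b),
    ∃ (e' : E) (ψ : e ≅ e') (h : p.obj e' = b), p.map ψ.hom ≫ eqToHom h = φ.hom

/-- The strict pullback `A ×_B E` of groupoids along `f : A ⥤ B` and `p : E ⥤ B`: the full
subcategory of the comma category `Comma f p` on the objects whose comparison morphism is
an identity, i.e. pairs `(a, e)` with `f.obj a = p.obj e`. -/
def StrictPullback {A E B : Type*} [Groupoid A] [Groupoid E] [Groupoid B]
    (f : A ⥤ B) (p : E ⥤ B) : Type _ :=
  ObjectProperty.FullSubcategory (fun x : Comma f p => ∃ h : f.obj x.left = p.obj x.right, x.hom = eqToHom h)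

instance {A E B : Type*} [Groupoid A] [Groupoid E] [Groupoid B] (f : A ⥤ B) (p : E ⥤ B) :
    Category (StrictPullback f p) :=
  ObjectProperty.FullSubcategory.category _

theorem IsIsofibration.surjective_obj {E B : Type*} [Groupoid E] [Groupoid B] {p : E ⥤ B}
    (hp : IsIsofibration p) [p.EssSurj] : Function.Surjective p.obj := fun b => by
  obtain ⟨e, -, he, -⟩ := hp (p.objPreimage b) b (p.objObjPreimageIso b)
  exact ⟨e, he⟩

namespace CategoryTheory.Comma

variable {A E B : Type*} [Category A] [Category E] [Category B] (f : A ⥤ B) (p : E ⥤ B)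

def strictObjects : ObjectProperty (Comma f p) :=
  fun x => ∃ h : f.obj x.left = p.obj x.right, x.hom = eqToHom h

abbrev strictFst : (strictObjects f p).FullSubcategory ⥤ A :=
  (strictObjects f p).ι ⋙ Comma.fst f p

instance faithful_strictFst [p.Faithful] : (strictFst f p).Faithful where
  map_injective {x y} g h hgh := by
    obtain ⟨hx, hxhom⟩ := x.2
    have hleft : g.hom.left = h.hom.left := hgh
    have hright : p.map g.hom.right = p.map h.hom.right := by
      have wg := g.hom.w
      have wh := h.hom.w
      simp only [hxhom] at wg wh
      exact (cancel_epi (eqToHom hx)).mp (by rw [← wg, ← wh, hleft])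
    exact InducedCategory.hom_ext (CommaMorphism.ext hleft (p.map_injective hright))

instance full_strictFst [p.Full] : (strictFst f p).Full where
  map_surjective {x y} u := by
    obtain ⟨hx, hxhom⟩ := x.2
    obtain ⟨hy, hyhom⟩ := y.2
    refine ⟨⟨⟨u, p.preimage (eqToHom hx.symm ≫ f.map u ≫ eqToHom hy), ?_⟩⟩, rfl⟩
    simp [hxhom, hyhom]

theorem essSurj_strictFst (hp : Function.Surjective p.obj) : (strictFst f p).EssSurj where
  mem_essImage a := by
    obtain ⟨e, he⟩ := hp (f.obj a)
    exact ⟨⟨⟨a, e, eqToHom he.symm⟩, he.symm, rfl⟩, ⟨Iso.refl a⟩⟩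

theorem isEquivalence_strictFst [p.Full] [p.Faithful] (hp : Function.Surjective p.obj) :
    (strictFst f p).IsEquivalence where
  essSurj := essSurj_strictFst f p hp

end CategoryTheory.Comma

/-- Right properness of the canonical model structure on groupoids at the level of a single
pullback square: if `p : E ⥤ B` is an isofibration and an equivalence, then for any
`f : A ⥤ B` the projection `A ×_B E ⥤ A` from the strict pullback is an equivalence. -/
theorem pullback_of_trivial_isofibration_is_equivalence
    {A E B : Type*} [Groupoid A] [Groupoid E] [Groupoid B]
    (f : A ⥤ B) (p : E ⥤ B) (hfib : IsIsofibration p) (heq : p.IsEquivalence) :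
    (ObjectProperty.ι
        (fun x : Comma f p => ∃ h : f.obj x.left = p.obj x.right, x.hom = eqToHom h) ⋙
      Comma.fst f p).IsEquivalence :=
  Comma.isEquivalence_strictFst f p hfib.surjective_obj
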